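/- arXiv:math/0401414 — 6 statements merged into one kernel-verified Lean document; each statement's English description precedes it below -/
import Mathlib

section
/- With A_{n,r}(a,b) defined by θ_n(X;a) = Σ_{r=0}^{n} A_{n,r}(a,b)·θ_r(X;b), one has the closed formula A_{n,r}(a,b) = Σ_J ∏_{i∈{1,...,n}\J} (b_{σ(i,J)} - a_i), where the sum runs over subsets J ⊆ {1,...,n} of size r, and σ(i,J) = 1 + #{j ∈ J : j < i}. -/
/-!
Multiplying `θ_n(X;a) = Σ_r A_{n,r} θ_r(X;b)` by `X - a_{n+1}` and using
`θ_r(X;b) (X - a_{n+1}) = θ_{r+1}(X;b) + (b_{r+1} - a_{n+1}) θ_r(X;b)` gives the recurrence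
`A_{n+1,r+1} = A_{n,r} + (b_{r+2} - a_{n+1}) A_{n,r+1}`. The subset sum obeys the same
recurrence, by splitting the subsets `J ⊆ {1,…,n+1}` according to whether `n+1 ∈ J`. Since
`θ_r(X;b)` is monic of degree `r`, the coefficients `A_{n,r}` are unique, so they agree.
-/

open Polynomial Finset

/-- `θ_n(X; c) = ∏_{i=1}^{n} (X - c_i)`, where the sequence `c : ℕ → R` is
0-indexed, i.e. `c i` is the `(i+1)`-st term `c_{i+1}`. -/
noncomputable def thetaSeq {R : Type*} [CommRing R] (c : ℕ → R) (n : ℕ) : Polynomial R :=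
  ∏ i ∈ range n, (X - C (c i))

section ThetaSeq

variable {R : Type*} [CommRing R]

theorem eq_zero_of_sum_C_mul_eq_zero {p : ℕ → R[X]} (hp : ∀ r, (p r).Monic)
    (hdeg : ∀ r, (p r).natDegree = r) {m : ℕ} {c : ℕ → R}
    (hsum : ∑ r ∈ range m, C (c r) * p r = 0) : ∀ r < m, c r = 0 := by
  induction m with
  | zero => intro r hr; omega
  | succ m ih =>
    have hcm : c m = 0 := by
      have hcoeff := congrArg (coeff · m) hsum
      have hlow : ∀ r ∈ range m, c r * (p r).coeff m = 0 := fun r hr => by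
        rw [coeff_eq_zero_of_natDegree_lt ((hdeg r).trans_lt (mem_range.mp hr)), mul_zero]
      have htop : (p m).coeff m = 1 := by simpa [hdeg m] using (hp m).coeff_natDegree
      simpa only [coeff_add, finsetSum_coeff, coeff_C_mul, coeff_zero, sum_range_succ,
        sum_eq_zero hlow, htop, zero_add, mul_one] using hcoeff
    rw [sum_range_succ, hcm, C_0, zero_mul, add_zero] at hsum
    intro r hr
    rcases Nat.lt_succ_iff_lt_or_eq.mp hr with hr | rfl
    · exact ih hsum r hr
    · exact hcm

theorem thetaSeq_succ (c : ℕ → R) (n : ℕ) :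
    thetaSeq c (n + 1) = thetaSeq c n * (X - C (c n)) :=
  prod_range_succ _ n

theorem thetaSeq_monic (c : ℕ → R) (n : ℕ) : (thetaSeq c n).Monic :=
  monic_prod_of_monic _ _ fun i _ => monic_X_sub_C (c i)

theorem natDegree_thetaSeq [Nontrivial R] (c : ℕ → R) (n : ℕ) :
    (thetaSeq c n).natDegree = n := by
  rw [thetaSeq, natDegree_finsetProd_X_sub_C_eq_card, card_range]

theorem thetaSeq_mul_X_sub_C (c : ℕ → R) (r : ℕ) (x : R) :
    thetaSeq c r * (X - C x) = thetaSeq c (r + 1) + C (c r - x) * thetaSeq c r := by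
  rw [thetaSeq_succ, C_sub]
  ring

end ThetaSeq

section ClosedFormula

variable {R : Type*} [CommRing R] (a b : ℕ → R)

noncomputable def thetaWeight (n : ℕ) (J : Finset ℕ) : R :=
  ∏ i ∈ range n \ J, (b (#(J.filter (· < i))) - a i)

noncomputable def thetaCoeff (n r : ℕ) : R :=
  ∑ J ∈ (range n).powersetCard r, thetaWeight a b n J

variable {a b}

theorem thetaWeight_succ_insert_self (n : ℕ) (J : Finset ℕ) :
    thetaWeight a b (n + 1) (insert n J) = thetaWeight a b n J := by
  rw [thetaWeight, range_add_one, insert_sdiff_insert, sdiff_insert_of_notMem notMem_range_self]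
  refine prod_congr rfl fun i hi => ?_
  have hin : ¬n < i := by simpa using (mem_range.mp (mem_sdiff.mp hi).1).le
  rw [filter_insert, if_neg hin]

theorem thetaWeight_succ_of_subset {n : ℕ} {J : Finset ℕ} (hJ : J ⊆ range n) :
    thetaWeight a b (n + 1) J = (b #J - a n) * thetaWeight a b n J := by
  have hnJ : n ∉ J := fun h => notMem_range_self (hJ h)
  have hfilter : J.filter (· < n) = J := filter_true_of_mem fun j hj => mem_range.mp (hJ hj)
  rw [thetaWeight, range_add_one, insert_sdiff_of_notMem _ hnJ,
    prod_insert fun h => notMem_range_self (mem_sdiff.mp h).1, hfilter, thetaWeight]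

variable (a b)

theorem thetaCoeff_eq_zero_of_lt {n r : ℕ} (h : n < r) : thetaCoeff a b n r = 0 := by
  rw [thetaCoeff, powersetCard_eq_empty.mpr (by simpa using h), sum_empty]

theorem thetaCoeff_succ_zero (n : ℕ) :
    thetaCoeff a b (n + 1) 0 = (b 0 - a n) * thetaCoeff a b n 0 := by
  simp only [thetaCoeff, powersetCard_zero, sum_singleton]
  exact thetaWeight_succ_of_subset (empty_subset _)

theorem thetaCoeff_succ_succ (n r : ℕ) :
    thetaCoeff a b (n + 1) (r + 1) =
      thetaCoeff a b n r + (b (r + 1) - a n) * thetaCoeff a b n (r + 1) := by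
  have hn : n ∉ range n := notMem_range_self
  have hdisj : Disjoint (powersetCard (r + 1) (range n))
      ((powersetCard r (range n)).image (insert n)) := by
    refine disjoint_right.mpr fun J hJ hJ' => ?_
    obtain ⟨K, -, rfl⟩ := mem_image.mp hJ
    exact hn ((mem_powersetCard.mp hJ').1 (mem_insert_self n K))
  have hinj : Set.InjOn (insert n) (powersetCard r (range n) : Set (Finset ℕ)) :=
    fun J hJ K hK hJK => by
      rw [← erase_insert fun h => hn ((mem_powersetCard.mp hJ).1 h),
        ← erase_insert fun h => hn ((mem_powersetCard.mp hK).1 h), hJK]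
  rw [thetaCoeff, range_add_one, powersetCard_succ_insert hn, sum_union hdisj,
    sum_image hinj, add_comm (thetaCoeff a b n r), thetaCoeff, thetaCoeff, mul_sum]
  congr 1
  · refine sum_congr rfl fun J hJ => ?_
    obtain ⟨hJn, hJr⟩ := mem_powersetCard.mp hJ
    rw [thetaWeight_succ_of_subset hJn, hJr]
  · exact sum_congr rfl fun J _ => thetaWeight_succ_insert_self n J

theorem thetaSeq_eq_sum_thetaCoeff (n : ℕ) :
    thetaSeq a n = ∑ r ∈ range (n + 1), C (thetaCoeff a b n r) * thetaSeq b r := by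
  induction n with
  | zero => simp [thetaSeq, thetaCoeff, thetaWeight]
  | succ n ih =>
    have hshift : ∑ r ∈ range (n + 1), C ((b r - a n) * thetaCoeff a b n r) * thetaSeq b r =
        C ((b 0 - a n) * thetaCoeff a b n 0) * thetaSeq b 0 +
          ∑ r ∈ range (n + 1),
            C ((b (r + 1) - a n) * thetaCoeff a b n (r + 1)) * thetaSeq b (r + 1) := by
      calc _ = ∑ r ∈ range (n + 2), C ((b r - a n) * thetaCoeff a b n r) * thetaSeq b r := by
            rw [sum_range_succ _ (n + 1), thetaCoeff_eq_zero_of_lt a b n.lt_succ_self, mul_zero,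
              C_0, zero_mul, add_zero]
        _ = _ := by rw [sum_range_succ', add_comm]
    calc thetaSeq a (n + 1)
        = ∑ r ∈ range (n + 1), (C (thetaCoeff a b n r) * thetaSeq b (r + 1) +
            C ((b r - a n) * thetaCoeff a b n r) * thetaSeq b r) := by
          rw [thetaSeq_succ, ih, sum_mul]
          refine sum_congr rfl fun r _ => ?_
          rw [mul_assoc, thetaSeq_mul_X_sub_C, C_mul]
          ring
      _ = ∑ r ∈ range (n + 2), C (thetaCoeff a b (n + 1) r) * thetaSeq b r := by
          rw [sum_add_distrib, hshift, sum_range_succ' _ (n + 1), thetaCoeff_succ_zero,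
            add_left_comm, ← sum_add_distrib, add_comm]
          congr 1
          refine sum_congr rfl fun r _ => ?_
          rw [thetaCoeff_succ_succ, C_add, C_mul]
          ring

end ClosedFormula

/-- With 0-indexed sequences the subsets `J` range over `{0,…,n-1}` and the index
`σ(i,J) - 1` becomes `#{j ∈ J : j < i}`. -/
theorem stmt5 {R : Type*} [CommRing R] (a b : ℕ → R) (A : ℕ → ℕ → R)
    (h : ∀ n : ℕ, thetaSeq a n = ∑ r ∈ range (n + 1), C (A n r) * thetaSeq b r)
    (hhigh : ∀ n r : ℕ, n < r → A n r = 0) :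
    ∀ n r : ℕ, A n r = ∑ J ∈ (range n).powersetCard r,
      ∏ i ∈ range n \ J, (b ((J.filter (fun j => j < i)).card) - a i) := by
  nontriviality R
  intro n r
  change A n r = thetaCoeff a b n r
  rcases le_or_gt r n with hrn | hrn
  · have hdiff : ∑ s ∈ range (n + 1), C (A n s - thetaCoeff a b n s) * thetaSeq b s = 0 := by
      simp only [C_sub, sub_mul, sum_sub_distrib, ← h, ← thetaSeq_eq_sum_thetaCoeff, sub_self]
    exact sub_eq_zero.mp <| eq_zero_of_sum_C_mul_eq_zero (thetaSeq_monic b)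
      (natDegree_thetaSeq b) hdiff r (Nat.lt_succ_of_le hrn)
  · rw [hhigh n r hrn, thetaCoeff_eq_zero_of_lt a b hrn]
end

section
/- For sequences c in a commutative ring R and integers r ≥ m ≥ 0, s ≥ 0: θ_r(X;c)·θ_s(X;c) = θ_m(X;c)·Σ_{j=s}^{r+s-m} A_{r-m,j-s}(c[m], c[s])·θ_j(X;c), where c[k] denotes the shifted sequence (c_{k+i})_{i≥1}. -/
open Polynomial Finset

/-
Write `r = m + n`. Then `θ_r(c) = θ_m(c) · θ_n(c[m])`; expanding `θ_n(c[m])` in the basis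
`θ_k(c[s])` and using `θ_s(c) · θ_k(c[s]) = θ_{s+k}(c)` gives the claim.
-/

lemma thetaSeq_add {R : Type*} [CommRing R] (c : ℕ → R) (m k : ℕ) :
    thetaSeq c (m + k) = thetaSeq c m * thetaSeq (fun i => c (m + i)) k := by
  simp only [thetaSeq, prod_range_add]

lemma sum_Icc_add_eq_sum_range {M : Type*} [AddCommMonoid M] (f : ℕ → M) (s n : ℕ) :
    ∑ j ∈ Icc s (s + n), f j = ∑ k ∈ range (n + 1), f (s + k) := by
  rw [← Ico_add_one_right_eq_Icc, sum_Ico_eq_sum_range, add_assoc, Nat.add_sub_cancel_left]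

lemma thetaSeq_mul_thetaSeq_eq_sum_Icc {R : Type*} [CommRing R] {a c : ℕ → R} {n s : ℕ}
    {coeff : ℕ → R}
    (hexp : thetaSeq a n =
      ∑ k ∈ range (n + 1), C (coeff k) * thetaSeq (fun i => c (s + i)) k) :
    thetaSeq a n * thetaSeq c s = ∑ j ∈ Icc s (s + n), C (coeff (j - s)) * thetaSeq c j := by
  rw [sum_Icc_add_eq_sum_range, hexp, sum_mul]
  refine sum_congr rfl fun k _ => ?_
  rw [Nat.add_sub_cancel_left, thetaSeq_add, mul_assoc, mul_comm (thetaSeq _ k)]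

/-- For `r ≥ m ≥ 0`, `s ≥ 0`:
`θ_r(X;c)·θ_s(X;c) = θ_m(X;c)·Σ_{j=s}^{r+s-m} A_{r-m,j-s}(c[m], c[s])·θ_j(X;c)`,
where `c[k]` is the shifted sequence and `A` is defined by the expansions
`θ_n(X;a) = Σ_{r=0}^{n} A(a,b,n,r)·θ_r(X;b)`. -/
theorem stmt6 {R : Type*} [CommRing R] (A : (ℕ → R) → (ℕ → R) → ℕ → ℕ → R)
    (h : ∀ (a b : ℕ → R) (n : ℕ),
      thetaSeq a n = ∑ r ∈ range (n + 1), C (A a b n r) * thetaSeq b r) :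
    ∀ (c : ℕ → R) (r m s : ℕ), m ≤ r →
      thetaSeq c r * thetaSeq c s =
        thetaSeq c m * ∑ j ∈ Finset.Icc s (r + s - m),
          C (A (fun i => c (m + i)) (fun i => c (s + i)) (r - m) (j - s)) *
            thetaSeq c j := by
  intro c r m s hmr
  obtain ⟨n, rfl⟩ := Nat.exists_eq_add_of_le hmr
  have hupper : m + n + s - m = s + n := by omega
  rw [hupper, Nat.add_sub_cancel_left, thetaSeq_add, mul_assoc,
    thetaSeq_mul_thetaSeq_eq_sum_Icc (h _ _ n)]
end

section
/- Let p be an odd prime, q primitive mod p², q̂ = q^{p-1}, and θ̂_n(X) = ∏_{i=0}^{n-1}(X − q̂^i). Define integers s(n,i) by θ̂_n(X) = Σ_{i=1}^{n} s(n,i)(X−1)^i for n ≥ 1. Then s(n,i) is divisible by p^{n-i} for all 1 ≤ i ≤ n. -/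
open Polynomial Finset

/-!
The substitution `X ↦ X + 1` turns `θ̂_n` into `∏ (X - (q̂^j - 1))`, whose `i`-th coefficient
is `s(n,i)`. Every `q̂^j - 1` is divisible by `p` by Fermat's little theorem, so induction on `n`
along `s(n+1,i) = s(n,i-1) - (q̂^n - 1) s(n,i)` gains one factor `p` per step.
-/

theorem pow_sub_dvd_coeff_prod_X_sub_C {R : Type*} [CommRing R] {a : R} {c : ℕ → R}
    (hc : ∀ j, a ∣ c j) (n i : ℕ) :
    a ^ (n - i) ∣ (∏ j ∈ range n, (X - C (c j))).coeff i := by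
  induction n generalizing i with
  | zero => rcases i with _ | i <;> simp
  | succ n ih =>
    rw [prod_range_succ]
    rcases i with _ | i
    · rw [mul_coeff_zero, Nat.sub_zero, pow_succ]
      simpa using mul_dvd_mul (ih 0) (hc n)
    · rw [coeff_mul_X_sub_C, Nat.add_sub_add_right]
      refine dvd_sub (ih i) ?_
      rcases le_or_gt n i with hni | hin
      · simp [Nat.sub_eq_zero_of_le hni]
      · rw [show n - i = n - (i + 1) + 1 by omega, pow_succ]
        exact mul_dvd_mul (ih (i + 1)) (hc n)

theorem taylor_prod_X_sub_C {R ι : Type*} [CommRing R] (r : R) (s : Finset ι) (c : ι → R) :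
    taylor r (∏ j ∈ s, (X - C (c j))) = ∏ j ∈ s, (X - C (c j - r)) := by
  simp only [taylor_apply, Polynomial.prod_comp, sub_comp, X_comp, C_comp, C_sub]
  exact prod_congr rfl fun j _ => by ring

theorem coeff_taylor_of_eq_sum {R : Type*} [CommRing R] {f : R[X]} {r : R} {s : Finset ℕ}
    {a : ℕ → R} (hf : f = ∑ i ∈ s, C (a i) * (X - C r) ^ i) {i : ℕ} (hi : i ∈ s) :
    (taylor r f).coeff i = a i := by
  simp [hf, taylor_mul, taylor_pow, finsetSum_coeff, coeff_C_mul, coeff_X_pow, hi]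

theorem Int.pow_card_sub_one_modEq_one_of_isUnit {p m : ℕ} (hp : p.Prime) (hpm : p ∣ m) {q : ℤ}
    (hq : IsUnit (q : ZMod m)) : q ^ (p - 1) ≡ 1 [ZMOD p] := by
  refine Int.ModEq.pow_card_sub_one_eq_one hp (IsCoprime.symm ?_)
  rw [← ZMod.coe_int_isUnit_iff_isCoprime]
  simpa using hq.map (ZMod.castHom hpm (ZMod p))

theorem stmt8_general (p : ℕ) (hp : p.Prime) (q : ℤ)
    (hq : orderOf (q : ZMod (p ^ 2)) = p * (p - 1))
    (s : ℕ → ℕ → ℤ)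
    (hs : ∀ n : ℕ, 1 ≤ n →
      (∏ i ∈ range n, (X - C ((q ^ (p - 1)) ^ i)) : Polynomial ℤ) =
        ∑ i ∈ Finset.Icc 1 n, C (s n i) * (X - 1) ^ i) :
    ∀ n i : ℕ, 1 ≤ i → i ≤ n → (p : ℤ) ^ (n - i) ∣ s n i := by
  intro n i hi hin
  have hunit : IsUnit (q : ZMod (p ^ 2)) := by
    refine IsOfFinOrder.isUnit (orderOf_pos_iff.mp ?_)
    rw [hq]
    exact Nat.mul_pos hp.pos (Nat.sub_pos_of_lt hp.one_lt)
  have hfermat := Int.pow_card_sub_one_modEq_one_of_isUnit hp (dvd_pow_self p two_ne_zero) hunit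
  have hdvd : ∀ j, (p : ℤ) ∣ (q ^ (p - 1)) ^ j - 1 := fun j => by
    simpa using (hfermat.pow j).symm.dvd
  have hexp := hs n (hi.trans hin)
  simp_rw [← C_1] at hexp
  rw [← coeff_taylor_of_eq_sum hexp (mem_Icc.mpr ⟨hi, hin⟩), taylor_prod_X_sub_C]
  exact pow_sub_dvd_coeff_prod_X_sub_C hdvd n i

/-- Let `p` be an odd prime, `q` primitive mod `p²`, `q̂ = q^{p-1}`, and
`θ̂_n(X) = ∏_{i=0}^{n-1}(X − q̂^i)`.  If the integers `s(n,i)` satisfy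
`θ̂_n(X) = Σ_{i=1}^{n} s(n,i)(X−1)^i` for `n ≥ 1`, then `p^{n-i} ∣ s(n,i)`
for all `1 ≤ i ≤ n`. -/
theorem stmt8 (p : ℕ) (hp : p.Prime) (hodd : Odd p) (q : ℤ)
    (hq : orderOf (q : ZMod (p ^ 2)) = p * (p - 1))
    (s : ℕ → ℕ → ℤ)
    (hs : ∀ n : ℕ, 1 ≤ n →
      (∏ i ∈ range n, (X - C ((q ^ (p - 1)) ^ i)) : Polynomial ℤ) =
        ∑ i ∈ Finset.Icc 1 n, C (s n i) * (X - 1) ^ i) :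
    ∀ n i : ℕ, 1 ≤ i → i ≤ n → (p : ℤ) ^ (n - i) ∣ s n i :=
  stmt8_general p hp q hq s hs
end

section
/- Let p be an odd prime, q primitive mod p², q̂ = q^{p-1}, θ̂_n(X) = ∏_{i=0}^{n-1}(X − q̂^i). Define S(n,i) ∈ ℤ by (X−1)^n = Σ_{i=1}^{n} S(n,i)·θ̂_i(X) for n ≥ 1. Then S(n,i) is divisible by p^{n-i}, S(n,n) = 1, and S(n,1) = (q̂−1)^{n-1}. -/
/-!
The polynomials `θ̂_i` are monic of degree `i`, so coefficients in the basis `θ̂_i` are unique.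
Since `(X - 1) θ̂_i = θ̂_{i+1} + (q̂^i - 1) θ̂_i`, the coefficients of `(X - 1)^n` obey
`S(n+1, i) = S(n, i-1) + (q̂^i - 1) S(n, i)`. As `q` is a unit mod `p²`, Fermat gives `p ∣ q̂ - 1`,
hence `p ∣ q̂^i - 1`, and each application of the recurrence that raises `n - i` contributes a
factor `p`.
-/

open Polynomial Finset

namespace Polynomial

variable {R : Type*} [CommRing R]

theorem eq_zero_of_sum_C_mul_monic_eq_zero [Nontrivial R] {f : ℕ → R[X]}
    (hmonic : ∀ i, (f i).Monic) (hdeg : ∀ i, (f i).natDegree = i) {c : ℕ → R} (s : Finset ℕ)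
    (h : ∑ i ∈ s, C (c i) * f i = 0) : ∀ i ∈ s, c i = 0 := by
  induction s using Finset.induction_on_max with
  | empty => simp
  | insert m t hlt ih =>
    have hm : c m = 0 := by
      have hlead : (f m).coeff m = 1 := by simpa [hdeg] using (hmonic m).coeff_natDegree
      have hlow : ∀ i ∈ t, c i * (f i).coeff m = 0 := fun i hi => by
        rw [coeff_eq_zero_of_natDegree_lt (by rw [hdeg]; exact hlt i hi), mul_zero]
      simpa [sum_insert (fun hm => (hlt m hm).false), finsetSum_coeff, hlead, sum_eq_zero hlow]
        using congrArg (coeff · m) h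
    rw [sum_insert (fun hm => (hlt m hm).false), hm, C_0, zero_mul, zero_add] at h
    simpa [hm] using ih h

theorem eq_of_sum_C_mul_monic_eq [Nontrivial R] {f : ℕ → R[X]}
    (hmonic : ∀ i, (f i).Monic) (hdeg : ∀ i, (f i).natDegree = i) {c d : ℕ → R} {s : Finset ℕ}
    (h : ∑ i ∈ s, C (c i) * f i = ∑ i ∈ s, C (d i) * f i) : ∀ i ∈ s, c i = d i := by
  refine fun i hi => sub_eq_zero.mp
    (eq_zero_of_sum_C_mul_monic_eq_zero (c := fun i => c i - d i) hmonic hdeg s ?_ i hi)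
  simp only [C_sub, sub_mul, sum_sub_distrib, h, sub_self]

noncomputable def qFallingFactorial (a : R) (i : ℕ) : R[X] := ∏ k ∈ range i, (X - C (a ^ k))

theorem qFallingFactorial_monic (a : R) (i : ℕ) : (qFallingFactorial a i).Monic :=
  monic_prod_of_monic _ _ fun _ _ => monic_X_sub_C _

theorem natDegree_qFallingFactorial [Nontrivial R] (a : R) (i : ℕ) :
    (qFallingFactorial a i).natDegree = i := by
  rw [qFallingFactorial, natDegree_prod_of_monic _ _ fun _ _ => monic_X_sub_C _]
  simp only [natDegree_X_sub_C, sum_const, card_range, smul_eq_mul, mul_one]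

theorem X_sub_one_mul_qFallingFactorial (a : R) (i : ℕ) :
    (X - 1) * qFallingFactorial a i =
      qFallingFactorial a (i + 1) + C (a ^ i - 1) * qFallingFactorial a i := by
  rw [qFallingFactorial, qFallingFactorial, prod_range_succ, C_sub, C_1]
  ring

/-- The coefficient of `qFallingFactorial a i` in `(X - 1) ^ n`; for `1 ≤ i ≤ n` this is `S(n, i)`
with `q̂ = a`. -/
def qStirling (a : R) : ℕ → ℕ → R
  | 0, 0 => 1
  | 0, _ + 1 => 0
  | _ + 1, 0 => 0
  | n + 1, i + 1 => qStirling a n i + (a ^ (i + 1) - 1) * qStirling a n (i + 1)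

variable (a : R)

@[simp] theorem qStirling_succ_zero (n : ℕ) : qStirling a (n + 1) 0 = 0 := rfl
theorem qStirling_succ_succ (n i : ℕ) :
    qStirling a (n + 1) (i + 1) = qStirling a n i + (a ^ (i + 1) - 1) * qStirling a n (i + 1) := rfl

theorem qStirling_eq_zero_of_lt : ∀ {n i : ℕ}, n < i → qStirling a n i = 0
  | 0, _ + 1, _ => rfl
  | n + 1, i + 1, h => by
    rw [qStirling_succ_succ, qStirling_eq_zero_of_lt (by omega),
      qStirling_eq_zero_of_lt (by omega), mul_zero, add_zero]

theorem qStirling_self : ∀ n, qStirling a n n = 1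
  | 0 => rfl
  | n + 1 => by
    rw [qStirling_succ_succ, qStirling_self n, qStirling_eq_zero_of_lt a n.lt_succ_self, mul_zero,
      add_zero]

theorem qStirling_succ_one : ∀ n, qStirling a (n + 1) 1 = (a - 1) ^ n
  | 0 => by simp [qStirling]
  | n + 1 => by
    rw [qStirling_succ_succ, qStirling_succ_one n, qStirling_succ_zero, zero_add, pow_one,
      pow_succ']

theorem pow_dvd_qStirling {p : R} (hp : p ∣ a - 1) : ∀ n i, p ^ (n - i) ∣ qStirling a n i
  | 0, _ => by simp
  | n + 1, 0 => by simp
  | n + 1, i + 1 => by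
    have hpi : p ∣ a ^ (i + 1) - 1 := by simpa using hp.trans (sub_dvd_pow_sub_pow a 1 (i + 1))
    rw [qStirling_succ_succ]
    refine dvd_add (by simpa using pow_dvd_qStirling hp n i) ?_
    exact (pow_dvd_pow p (by omega)).trans
      (pow_succ' p (n - (i + 1)) ▸ mul_dvd_mul hpi (pow_dvd_qStirling hp n (i + 1)))

theorem X_sub_one_pow_eq_sum_qStirling (n : ℕ) :
    (X - 1 : R[X]) ^ n = ∑ i ∈ range (n + 1), C (qStirling a n i) * qFallingFactorial a i := by
  induction n with
  | zero => simp [qFallingFactorial, qStirling]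
  | succ n ih =>
    set g : ℕ → R[X] := fun i => C ((a ^ i - 1) * qStirling a n i) * qFallingFactorial a i
    -- the terms of `g` at `0` and `n + 1` vanish
    have hshift : ∑ i ∈ range (n + 1), g (i + 1) = ∑ i ∈ range (n + 1), g i := by
      have h := (sum_range_succ' g (n + 1)).symm.trans (sum_range_succ g (n + 1))
      simpa [g, qStirling_eq_zero_of_lt a n.lt_succ_self] using h
    calc (X - 1 : R[X]) ^ (n + 1)
        = ∑ i ∈ range (n + 1), (C (qStirling a n i) * qFallingFactorial a (i + 1) + g i) := by
          rw [pow_succ', ih, mul_sum]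
          refine sum_congr rfl fun i _ => ?_
          rw [mul_left_comm, X_sub_one_mul_qFallingFactorial]
          simp only [g, C_mul]
          ring
      _ = ∑ i ∈ range (n + 1), (C (qStirling a n i) * qFallingFactorial a (i + 1) + g (i + 1)) := by
          rw [sum_add_distrib, sum_add_distrib, hshift]
      _ = ∑ i ∈ range (n + 2), C (qStirling a (n + 1) i) * qFallingFactorial a i := by
          rw [sum_range_succ' _ (n + 1), qStirling_succ_zero, C_0, zero_mul, add_zero]
          refine sum_congr rfl fun i _ => ?_
          simp only [g, qStirling_succ_succ, C_add, C_mul]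
          ring

theorem X_sub_one_pow_eq_sum_Icc_qStirling {n : ℕ} (hn : n ≠ 0) :
    (X - 1 : R[X]) ^ n = ∑ i ∈ Icc 1 n, C (qStirling a n i) * qFallingFactorial a i := by
  obtain ⟨m, rfl⟩ := Nat.exists_eq_add_one_of_ne_zero hn
  rw [X_sub_one_pow_eq_sum_qStirling a, range_eq_Ico, Ico_add_one_right_eq_Icc,
    ← insert_Icc_add_one_left_eq_Icc (m + 1).zero_le, sum_insert (by simp), qStirling_succ_zero,
    C_0, zero_mul, zero_add, zero_add]

end Polynomial

theorem stmt9_general (p : ℕ) (hp : p.Prime) (q : ℤ)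
    (hq : orderOf (q : ZMod (p ^ 2)) = p * (p - 1))
    (S : ℕ → ℕ → ℤ)
    (hS : ∀ n : ℕ, 1 ≤ n →
      ((X - 1) ^ n : Polynomial ℤ) =
        ∑ i ∈ Finset.Icc 1 n,
          C (S n i) * ∏ k ∈ range i, (X - C ((q ^ (p - 1)) ^ k))) :
    (∀ n i : ℕ, 1 ≤ i → i ≤ n → (p : ℤ) ^ (n - i) ∣ S n i) ∧
    (∀ n : ℕ, 1 ≤ n → S n n = 1) ∧
    (∀ n : ℕ, 1 ≤ n → S n 1 = (q ^ (p - 1) - 1) ^ (n - 1)) := by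
  have hunit : IsUnit (q : ZMod (p ^ 2)) :=
    (orderOf_pos_iff.mp (hq ▸ Nat.mul_pos hp.pos (Nat.sub_pos_of_lt hp.one_lt))).isUnit
  have hcop : IsCoprime q p := by
    rw [ZMod.coe_int_isUnit_iff_isCoprime, Nat.cast_pow, IsCoprime.pow_left_iff two_pos] at hunit
    exact hunit.symm
  have hpa : (p : ℤ) ∣ q ^ (p - 1) - 1 := Int.prime_dvd_pow_sub_one hp hcop
  have hS_eq : ∀ n, 1 ≤ n → ∀ i ∈ Icc 1 n, S n i = qStirling (q ^ (p - 1)) n i := fun n hn =>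
    eq_of_sum_C_mul_monic_eq (qFallingFactorial_monic _) (natDegree_qFallingFactorial _)
      ((hS n hn).symm.trans (X_sub_one_pow_eq_sum_Icc_qStirling _ (by omega)))
  refine ⟨fun n i hi hin => ?_, fun n hn => ?_, fun n hn => ?_⟩
  · rw [hS_eq n (hi.trans hin) i (mem_Icc.mpr ⟨hi, hin⟩)]
    exact pow_dvd_qStirling _ hpa n i
  · rw [hS_eq n hn n (mem_Icc.mpr ⟨hn, le_rfl⟩), qStirling_self]
  · obtain ⟨m, rfl⟩ := Nat.exists_eq_add_of_le' hn
    rw [hS_eq (m + 1) hn 1 (mem_Icc.mpr ⟨le_rfl, hn⟩), qStirling_succ_one, Nat.add_sub_cancel]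

/-- Let `p` be an odd prime, `q` primitive mod `p²`, `q̂ = q^{p-1}`, and
`θ̂_n(X) = ∏_{i=0}^{n-1}(X − q̂^i)`.  If the integers `S(n,i)` satisfy
`(X−1)^n = Σ_{i=1}^{n} S(n,i)·θ̂_i(X)` for `n ≥ 1`, then `p^{n-i} ∣ S(n,i)`,
`S(n,n) = 1`, and `S(n,1) = (q̂−1)^{n-1}`. -/
theorem stmt9 (p : ℕ) (hp : p.Prime) (hodd : Odd p) (q : ℤ)
    (hq : orderOf (q : ZMod (p ^ 2)) = p * (p - 1))
    (S : ℕ → ℕ → ℤ)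
    (hS : ∀ n : ℕ, 1 ≤ n →
      ((X - 1) ^ n : Polynomial ℤ) =
        ∑ i ∈ Finset.Icc 1 n,
          C (S n i) * ∏ k ∈ range i, (X - C ((q ^ (p - 1)) ^ k))) :
    (∀ n i : ℕ, 1 ≤ i → i ≤ n → (p : ℤ) ^ (n - i) ∣ S n i) ∧
    (∀ n : ℕ, 1 ≤ n → S n n = 1) ∧
    (∀ n : ℕ, 1 ≤ n → S n 1 = (q ^ (p - 1) - 1) ^ (n - 1)) :=
  stmt9_general p hp q hq S hS
end

section
/- Let q be transcendental over ℚ and define Θ_n(X) = ∏_{i=1}^{n}(X − q̄_i), where q̄_i = q^{(−1)^i⌊i/2⌋} (so the sequence is 1, q, q^{−1}, q², q^{−2}, ...). Then for all n ≥ 0, Θ_n(X) = Σ_{j=0}^{n} (−1)^{n−j} q^{e(n,j)} [n choose j]_q X^j, where e(n,j) = −(n−j)(j−1)/2 if n is even and e(n,j) = −(n−j)j/2 if n is odd. -/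
/-!
The alternating sequence `1, q, q⁻¹, q², q⁻², …` of the first `n` roots of `Θ_n` is, up to order,
the geometric progression `c, c q, …, c q^(n-1)` with `c = q^(1 - ⌊(n+1)/2⌋)`. So `Θ_n` is the
product in the Gauss–Cauchy `q`-binomial theorem
`∏_{k<n} (X - c q^k) = ∑_j (-c)^(n-j) q^(n-j choose 2) [n choose j]_q X^j`, which follows
coefficientwise from the `q`-Pascal rule; `e(n,j)` is the exponent
`(1 - ⌊(n+1)/2⌋)(n-j) + (n-j choose 2)` of `q` collected there.
-/

open Polynomial Finset

/-- `θ_n(x) = ∏_{k=0}^{n-1} (x - q^k)`. -/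
noncomputable def thetaEval {K : Type*} [Field K] (q x : K) (n : ℕ) : K :=
  ∏ k ∈ range n, (x - q ^ k)

/-- Gaussian binomial coefficient `[n choose j]_q = θ_j(q^n)/θ_j(q^j)`. -/
noncomputable def gaussBinom {K : Type*} [Field K] (q : K) (n j : ℕ) : K :=
  thetaEval q (q ^ n) j / thetaEval q (q ^ j) j

/-- `Θ_n(X) = ∏_{i=1}^{n}(X − q̄_i)` where `q̄_i = q^{(−1)^i·⌊i/2⌋}`,
i.e. the sequence `1, q, q⁻¹, q², q⁻², …`. -/
noncomputable def ThetaPoly {K : Type*} [Field K] (q : K) (n : ℕ) : Polynomial K :=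
  ∏ i ∈ Finset.Icc 1 n, (X - C (q ^ ((-1 : ℤ) ^ i * ((i : ℤ) / 2))))

/-- The exponent `e(n,j)`: `−(n−j)(j−1)/2` if `n` is even, `−(n−j)j/2` if `n` is odd. -/
def eExp (n j : ℕ) : ℤ :=
  if Even n then -(((n : ℤ) - j) * ((j : ℤ) - 1)) / 2
  else -(((n : ℤ) - j) * (j : ℤ)) / 2

theorem Transcendental.pow_injective {R A : Type*} [CommRing R] [Nontrivial R] [Ring A]
    [Algebra R A] {x : A} (hx : Transcendental R x) : Function.Injective (x ^ · : ℕ → A) := by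
  intro a b hab
  by_contra hne
  refine hx ⟨X ^ a - X ^ b, fun h => ?_, by simp [hab]⟩
  simpa [coeff_X_pow, hne] using congrArg (coeff · a) h

def thetaShift (n : ℕ) : ℤ := 1 - ((n : ℤ) + 1) / 2

theorem prod_Icc_alternating_eq_prod_range {M : Type*} [CommMonoid M] (f : ℤ → M) (n : ℕ) :
    ∏ i ∈ Icc 1 n, f ((-1) ^ i * ((i : ℤ) / 2)) = ∏ k ∈ range n, f (thetaShift n + k) := by
  induction n with
  | zero => simp
  | succ n ih =>
    rw [prod_Icc_succ_top (by omega), ih]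
    rcases Nat.even_or_odd' n with ⟨k, rfl | rfl⟩
    · have hshift : thetaShift (2 * k) = thetaShift (2 * k + 1) + 1 := by
        simp only [thetaShift]; push_cast; omega
      rw [prod_range_succ', hshift]
      congr 1
      · refine prod_congr rfl fun i _ => congr_arg f ?_
        push_cast; ring
      · rw [(Odd.neg_one_pow ⟨k, rfl⟩ : (-1 : ℤ) ^ (2 * k + 1) = -1)]
        refine congr_arg f ?_
        simp only [thetaShift]; push_cast; omega
    · have hshift : thetaShift (2 * k + 1 + 1) = thetaShift (2 * k + 1) := by
        simp only [thetaShift]; push_cast; omega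
      rw [prod_range_succ _ (2 * k + 1), hshift,
        (Even.neg_one_pow ⟨k + 1, by ring⟩ : (-1 : ℤ) ^ (2 * k + 1 + 1) = 1)]
      refine congr_arg (_ * ·) (congr_arg f ?_)
      simp only [thetaShift]; push_cast; omega

theorem two_mul_choose_two (m : ℕ) : 2 * (m.choose 2 : ℤ) = m * ((m : ℤ) - 1) := by
  have h := Nat.cast_choose_two ℚ m
  have : (2 * (m.choose 2 : ℤ) : ℚ) = ((m * ((m : ℤ) - 1) : ℤ) : ℚ) := by
    push_cast; rw [h]; ring
  exact_mod_cast this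

theorem thetaShift_mul_add_choose_two_eq_eExp {n j : ℕ} (h : j ≤ n) :
    thetaShift n * (n - j : ℕ) + ((n - j).choose 2 : ℕ) = eExp n j := by
  obtain ⟨m, rfl⟩ := Nat.exists_eq_add_of_le h
  have hc := two_mul_choose_two m
  rw [Nat.add_sub_cancel_left]
  rcases Nat.even_or_odd' (j + m) with ⟨k, hk | hk⟩
  · have hshift : thetaShift (j + m) = 1 - k := by simp only [thetaShift]; push_cast; omega
    rw [eExp, if_pos ⟨k, by omega⟩, hshift]
    have hk' : (j : ℤ) + m = 2 * k := by exact_mod_cast hk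
    rw [show -((((j + m : ℕ) : ℤ) - j) * ((j : ℤ) - 1)) = 2 * ((1 - k) * m + (m.choose 2 : ℤ)) by
      push_cast; linear_combination -hc - m * hk', Int.mul_ediv_cancel_left _ two_ne_zero]
  · have hshift : thetaShift (j + m) = -k := by simp only [thetaShift]; push_cast; omega
    rw [eExp, if_neg (Nat.not_even_iff_odd.2 ⟨k, hk⟩), hshift]
    have hk' : (j : ℤ) + m = 2 * k + 1 := by exact_mod_cast hk
    rw [show -((((j + m : ℕ) : ℤ) - j) * (j : ℤ)) = 2 * (-k * m + (m.choose 2 : ℤ)) by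
      push_cast; linear_combination -hc - m * hk', Int.mul_ediv_cancel_left _ two_ne_zero]

section GaussBinom

variable {K : Type*} [Field K] (q : K)

theorem thetaEval_succ (x : K) (j : ℕ) :
    thetaEval q x (j + 1) = thetaEval q x j * (x - q ^ j) :=
  prod_range_succ _ _

theorem thetaEval_pow_succ (n j : ℕ) :
    thetaEval q (q ^ (n + 1)) (j + 1) = (q ^ (n + 1) - 1) * q ^ j * thetaEval q (q ^ n) j := by
  have hfactor : ∀ k, q ^ (n + 1) - q ^ (k + 1) = q * (q ^ n - q ^ k) := fun k => by ring
  rw [thetaEval, prod_range_succ', thetaEval]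
  simp only [hfactor, prod_mul_distrib, prod_const, card_range, pow_zero]
  ring

theorem thetaEval_pow_eq_zero {n j : ℕ} (h : n < j) : thetaEval q (q ^ n) j = 0 :=
  prod_eq_zero (mem_range.2 h) (sub_self _)

theorem gaussBinom_zero_right (n : ℕ) : gaussBinom q n 0 = 1 := by
  simp [gaussBinom, thetaEval]

theorem gaussBinom_eq_zero_of_lt {n j : ℕ} (h : n < j) : gaussBinom q n j = 0 := by
  rw [gaussBinom, thetaEval_pow_eq_zero q h, zero_div]

variable {q} (hq : Function.Injective (q ^ · : ℕ → K))
include hq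

theorem ne_zero_of_injective_pow : q ≠ 0 := by
  rintro rfl
  exact absurd (@hq 1 2 (by simp)) (by norm_num)

theorem thetaEval_pow_self_ne_zero (j : ℕ) : thetaEval q (q ^ j) j ≠ 0 :=
  prod_ne_zero_iff.2 fun _ hk => sub_ne_zero.2 (hq.ne (mem_range.1 hk).ne')

theorem gaussBinom_self (n : ℕ) : gaussBinom q n n = 1 :=
  div_self (thetaEval_pow_self_ne_zero hq n)

theorem gaussBinom_succ_succ (n j : ℕ) :
    gaussBinom q (n + 1) (j + 1) = gaussBinom q n j + q ^ (j + 1) * gaussBinom q n (j + 1) := by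
  have hq₀ := ne_zero_of_injective_pow hq
  have hD := thetaEval_pow_self_ne_zero hq j
  have hpow : q ^ (j + 1) - 1 ≠ 0 := sub_ne_zero.2 (by simpa using hq.ne (Nat.succ_ne_zero j))
  rw [gaussBinom, gaussBinom, gaussBinom, thetaEval_pow_succ q n j, thetaEval_pow_succ q j j,
    thetaEval_succ q (q ^ n) j]
  field_simp
  ring

-- Also for `j > n`: the truncated `n - j` is harmless there since `gaussBinom q n j = 0`.
theorem coeff_prod_X_sub_C_mul_pow (c : K) (n j : ℕ) :
    (∏ k ∈ range n, (X - C (c * q ^ k))).coeff j =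
      (-c) ^ (n - j) * q ^ (n - j).choose 2 * gaussBinom q n j := by
  induction n generalizing j with
  | zero =>
    cases j with
    | zero => simp [gaussBinom_zero_right]
    | succ j => simp [coeff_one, gaussBinom_eq_zero_of_lt q (Nat.succ_pos j)]
  | succ n ih =>
    rw [prod_range_succ]
    cases j with
    | zero =>
      simp only [mul_coeff_zero, ih, coeff_sub, coeff_X_zero, coeff_C_zero, gaussBinom_zero_right,
        Nat.sub_zero, Nat.choose_succ_succ, Nat.choose_one_right]
      ring
    | succ j =>
      rw [coeff_mul_X_sub_C, ih, ih]
      rcases lt_or_ge n j with hlt | hle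
      · simp [gaussBinom_eq_zero_of_lt q hlt, gaussBinom_eq_zero_of_lt q (Nat.succ_lt_succ hlt),
          gaussBinom_eq_zero_of_lt q (hlt.trans (Nat.lt_succ_self j))]
      obtain ⟨m, rfl⟩ := Nat.exists_eq_add_of_le hle
      cases m with
      | zero => simp [gaussBinom_self hq, gaussBinom_eq_zero_of_lt q (Nat.lt_succ_self j)]
      | succ m =>
        rw [gaussBinom_succ_succ hq, show j + (m + 1) + 1 - (j + 1) = m + 1 by omega,
          show j + (m + 1) - j = m + 1 by omega, show j + (m + 1) - (j + 1) = m by omega,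
          Nat.choose_succ_succ, Nat.choose_one_right]
        ring

theorem prod_X_sub_C_mul_pow_eq_sum_gaussBinom (c : K) (n : ℕ) :
    ∏ k ∈ range n, (X - C (c * q ^ k)) = ∑ j ∈ range (n + 1),
      C ((-c) ^ (n - j) * q ^ (n - j).choose 2 * gaussBinom q n j) * X ^ j := by
  rw [as_sum_range_C_mul_X_pow (∏ k ∈ range n, (X - C (c * q ^ k))),
    natDegree_finsetProd_X_sub_C_eq_card, card_range]
  simp only [coeff_prod_X_sub_C_mul_pow hq]

end GaussBinom

theorem thetaPoly_eq_prod {K : Type*} [Field K] {q : K} (hq₀ : q ≠ 0) (n : ℕ) :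
    ThetaPoly q n = ∏ k ∈ range n, (X - C (q ^ thetaShift n * q ^ k)) := by
  rw [ThetaPoly, prod_Icc_alternating_eq_prod_range (fun z => X - C (q ^ z))]
  simp only [zpow_add₀ hq₀, zpow_natCast]

/-- For all `n ≥ 0`,
`Θ_n(X) = Σ_{j=0}^{n} (−1)^{n−j} q^{e(n,j)} [n choose j]_q X^j`. -/
theorem stmt11 {K : Type*} [Field K] [Algebra ℚ K] (q : K)
    (hq : Transcendental ℚ q) (n : ℕ) :
    ThetaPoly q n = ∑ j ∈ range (n + 1),
      C ((-1 : K) ^ (n - j) * q ^ (eExp n j) * gaussBinom q n j) * X ^ j := by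
  have hinj := hq.pow_injective
  have hq₀ := ne_zero_of_injective_pow hinj
  rw [thetaPoly_eq_prod hq₀, prod_X_sub_C_mul_pow_eq_sum_gaussBinom hinj]
  refine sum_congr rfl fun j hj => ?_
  rw [← thetaShift_mul_add_choose_two_eq_eExp (mem_range_succ_iff.1 hj), zpow_add₀ hq₀, zpow_mul,
    zpow_natCast, zpow_natCast, neg_pow]
  congr 2
  ring
end

section
/- Let R be the subring of ℚ[z] consisting of polynomials f with f(1 + pℤ_p ∩ ℤ_(p)) ⊆ ℤ_(p), i.e., f(x) ∈ ℤ_(p) for all x ∈ 1 + pℤ_(p). Let p be an odd prime, q primitive mod p², q̂ = q^{p−1}. Then the polynomials f̂_n(z) = ∏_{i=0}^{n-1}(z − q̂^i) / ∏_{i=0}^{n-1}(q̂^n − q̂^i), n ≥ 0, all lie in R. -/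
/-!
Put `Q = q^(p-1)`, write `x = X / b` with `p ∤ b`, `X ≡ b (mod p)`, and let
`D = ∏_{i<n} (Q^n - Q^i)`. As `Q ≡ 1 (mod p)` but not mod `p²`, lifting the exponent
gives `v_p(Q^j - 1) = 1 + v_p(j)`, so `v_p(∏_{i<n} (Q^m - Q^i)) = n + v_p(m(m-1)⋯(m-n+1))`;
for `m ≥ n` this is at least `n + v_p(n!) = v_p(D)` because `n!` divides the descending factorial.
Modulo `p^(k+1)` the powers of `Q` form a subgroup of order `p^k` of the kernel of reduction
mod `p` on units, which also has order `p^k`; so `X ≡ b Q^m (mod p^(v_p(D)))` for some `m ≥ n`,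
and then `∏ (X - b Q^i) ≡ b^n ∏ (Q^m - Q^i) ≡ 0`.
-/

open Finset

theorem ZMod.card_ker_unitsMap_prime_pow {p : ℕ} (hp : p.Prime) (k : ℕ) :
    Nat.card (ZMod.unitsMap (dvd_pow_self p k.succ_ne_zero)).ker = p ^ k := by
  have : Fact p.Prime := ⟨hp⟩
  have hmul := Subgroup.card_mul_index (ZMod.unitsMap (dvd_pow_self p k.succ_ne_zero)).ker
  rw [Subgroup.index_ker, MonoidHom.range_eq_top.mpr (ZMod.unitsMap_surjective _),
    Subgroup.card_top] at hmul
  simp only [Nat.card_eq_fintype_card, ZMod.card_units_eq_totient,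
    Nat.totient_prime_pow_succ hp, Nat.totient_prime hp] at hmul ⊢
  exact Nat.eq_of_mul_eq_mul_right (Nat.sub_pos_of_lt hp.one_lt) hmul

theorem ZMod.exists_eq_mul_pow_of_unitsMap_eq {p k : ℕ} (hp : p.Prime)
    {u x y : (ZMod (p ^ (k + 1)))ˣ} (hu : ZMod.unitsMap (dvd_pow_self p k.succ_ne_zero) u = 1)
    (hord : orderOf u = p ^ k)
    (hxy : ZMod.unitsMap (dvd_pow_self p k.succ_ne_zero) x =
      ZMod.unitsMap (dvd_pow_self p k.succ_ne_zero) y) :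
    ∃ t : ℕ, x = y * u ^ t := by
  have hker : Subgroup.zpowers u = (ZMod.unitsMap (dvd_pow_self p k.succ_ne_zero)).ker :=
    Subgroup.eq_of_le_of_card_ge (Subgroup.zpowers_le.mpr hu)
      (by rw [ZMod.card_ker_unitsMap_prime_pow hp, Nat.card_zpowers, hord])
  have hmem : y⁻¹ * x ∈ Subgroup.zpowers u := by
    rw [hker, MonoidHom.mem_ker, map_mul, map_inv, hxy, inv_mul_cancel]
  obtain ⟨t, ht⟩ := mem_powers_iff_mem_zpowers.mpr hmem
  exact ⟨t, by rw [show u ^ t = y⁻¹ * x from ht, mul_inv_cancel_left]⟩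

section

variable {p : ℕ} (hp : p.Prime) (hodd : Odd p) {Q : ℤ} (hQ1 : (p : ℤ) ∣ Q - 1)
  (hQ2 : ¬ (p : ℤ) ^ 2 ∣ Q - 1)
include hp hQ1

theorem not_dvd_of_dvd_sub_one : ¬ (p : ℤ) ∣ Q := fun h ↦
  Nat.prime_iff_prime_int.mp hp |>.not_dvd_one (by simpa using dvd_sub h hQ1)

include hodd hQ2

theorem orderOf_intCast_zmod_prime_pow (k : ℕ) : orderOf (Q : ZMod (p ^ (k + 1))) = p ^ k := by
  obtain ⟨a, ha⟩ := hQ1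
  have hpa : ¬ (p : ℤ) ∣ a := fun h ↦ hQ2 (by rw [ha, sq]; exact mul_dvd_mul_left _ h)
  have hp2 : p ≠ 2 := by rintro rfl; exact absurd hodd (by decide)
  rw [show Q = 1 + p * a by linarith, ← ZMod.orderOf_one_add_mul_prime hp hp2 a hpa k]
  push_cast
  rfl

theorem exists_le_pow_dvd_sub_mul_pow (k n : ℕ) {X b : ℤ} (hXb : (p : ℤ) ∣ X - b)
    (hb : ¬ (p : ℤ) ∣ b) : ∃ m, n ≤ m ∧ (p : ℤ) ^ (k + 1) ∣ X - b * Q ^ m := by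
  have hprime : Prime (p : ℤ) := Nat.prime_iff_prime_int.mp hp
  have hcop (c : ℤ) (hc : ¬ (p : ℤ) ∣ c) : IsCoprime c ((p ^ (k + 1) : ℕ) : ℤ) := by
    push_cast
    exact (hprime.coprime_iff_not_dvd.mpr hc).pow_left.symm
  have hX : ¬ (p : ℤ) ∣ X := fun h ↦ hb (by simpa using dvd_sub h hXb)
  have hpQ : ¬ (p : ℤ) ∣ Q := not_dvd_of_dvd_sub_one hp hQ1
  have hmap (c : ℤ) (hc) : (ZMod.unitsMap (dvd_pow_self p k.succ_ne_zero)
      (ZMod.unitOfIsCoprime c (hcop c hc)) : ZMod p) = c := by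
    simp [ZMod.unitsMap_val, ZMod.cast_intCast (dvd_pow_self p k.succ_ne_zero)]
  have hmodp {c d : ℤ} (hcd : (p : ℤ) ∣ c - d) : (c : ZMod p) = d :=
    (ZMod.intCast_eq_intCast_iff_dvd_sub _ _ _).mpr (dvd_sub_comm.mp hcd)
  have hord := orderOf_intCast_zmod_prime_pow hp hodd hQ1 hQ2 k
  obtain ⟨t, ht⟩ := ZMod.exists_eq_mul_pow_of_unitsMap_eq hp
    (u := ZMod.unitOfIsCoprime Q (hcop Q hpQ)) (x := ZMod.unitOfIsCoprime X (hcop X hX))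
    (y := ZMod.unitOfIsCoprime b (hcop b hb))
    (Units.ext (by rw [hmap Q hpQ, Units.val_one, ← Int.cast_one]; exact hmodp hQ1))
    (orderOf_units.symm.trans hord)
    (Units.ext (by rw [hmap X hX, hmap b hb]; exact hmodp hXb))
  have hXQ : (X : ZMod (p ^ (k + 1))) = b * Q ^ t := by simpa using congrArg Units.val ht
  refine ⟨t + p ^ k * n, le_add_left (Nat.le_mul_of_pos_left n (pow_pos hp.pos k)), ?_⟩
  have hQpow : (Q : ZMod (p ^ (k + 1))) ^ (t + p ^ k * n) = Q ^ t := by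
    rw [pow_add (Q : ZMod (p ^ (k + 1))), pow_mul, ← hord, pow_orderOf_eq_one, one_pow, mul_one]
  exact_mod_cast (ZMod.intCast_eq_intCast_iff_dvd_sub (b * Q ^ (t + p ^ k * n)) X _).mp
    (by push_cast; rw [hQpow, hXQ])

theorem emultiplicity_pow_sub_one (j : ℕ) :
    emultiplicity (p : ℤ) (Q ^ j - 1) = 1 + emultiplicity p j := by
  have hlte := Int.emultiplicity_pow_sub_pow hp hodd (y := 1) (by simpa using hQ1)
    (not_dvd_of_dvd_sub_one hp hQ1) j
  rw [one_pow] at hlte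
  rw [hlte, show emultiplicity (p : ℤ) (Q - 1) = (1 : ℕ) from
    emultiplicity_eq_coe.mpr ⟨by simpa using hQ1, hQ2⟩]
  rfl

theorem emultiplicity_prod_pow_sub_pow {m n : ℕ} (hnm : n ≤ m) :
    emultiplicity (p : ℤ) (∏ i ∈ range n, (Q ^ m - Q ^ i)) =
      n + emultiplicity p (m.descFactorial n) := by
  have hprime : Prime (p : ℤ) := Nat.prime_iff_prime_int.mp hp
  have hpQ : ¬ (p : ℤ) ∣ Q := not_dvd_of_dvd_sub_one hp hQ1
  have hterm : ∀ i ∈ range n, emultiplicity (p : ℤ) (Q ^ m - Q ^ i) =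
      1 + emultiplicity p (m - i) := fun i hi ↦ by
    have him : i ≤ m := (mem_range.mp hi).le.trans hnm
    rw [show Q ^ m - Q ^ i = Q ^ i * (Q ^ (m - i) - 1) by
        rw [mul_sub, ← pow_add, Nat.add_sub_cancel' him, mul_one],
      emultiplicity_mul hprime, emultiplicity_eq_zero.mpr fun h ↦ hpQ (hprime.dvd_of_dvd_pow h),
      zero_add, emultiplicity_pow_sub_one hp hodd hQ1 hQ2]
  rw [Finset.emultiplicity_prod hprime, Nat.descFactorial_eq_prod_range,
    Finset.emultiplicity_prod hp.prime, sum_congr rfl hterm, sum_add_distrib, sum_const,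
    card_range, nsmul_one]

theorem emultiplicity_prod_pow_sub_pow_le {m n : ℕ} (hnm : n ≤ m) :
    emultiplicity (p : ℤ) (∏ i ∈ range n, (Q ^ n - Q ^ i)) ≤
      emultiplicity (p : ℤ) (∏ i ∈ range n, (Q ^ m - Q ^ i)) := by
  rw [emultiplicity_prod_pow_sub_pow hp hodd hQ1 hQ2 le_rfl,
    emultiplicity_prod_pow_sub_pow hp hodd hQ1 hQ2 hnm, Nat.descFactorial_self]
  gcongr
  exact emultiplicity_le_emultiplicity_of_dvd_right (Nat.factorial_dvd_descFactorial m n)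

theorem prod_pow_sub_pow_ne_zero (n : ℕ) : ∏ i ∈ range n, (Q ^ n - Q ^ i) ≠ 0 := by
  intro h0
  have hfin : FiniteMultiplicity p n.factorial :=
    Nat.finiteMultiplicity_iff.mpr ⟨hp.ne_one, n.factorial_pos⟩
  have hval := emultiplicity_prod_pow_sub_pow hp hodd hQ1 hQ2 (le_refl n)
  rw [h0, emultiplicity_zero, Nat.descFactorial_self] at hval
  exact (ENat.add_lt_top.mpr ⟨ENat.natCast_lt_top n, emultiplicity_lt_top.mpr hfin⟩).ne
    hval.symm

theorem emultiplicity_prod_pow_sub_pow_le_emultiplicity_prod_sub (n : ℕ) {X b : ℤ}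
    (hXb : (p : ℤ) ∣ X - b) (hb : ¬ (p : ℤ) ∣ b) :
    emultiplicity (p : ℤ) (∏ i ∈ range n, (Q ^ n - Q ^ i)) ≤
      emultiplicity (p : ℤ) (∏ i ∈ range n, (X - b * Q ^ i)) := by
  have hfin : FiniteMultiplicity (p : ℤ) (∏ i ∈ range n, (Q ^ n - Q ^ i)) :=
    Int.finiteMultiplicity_iff.mpr
      ⟨by simpa using hp.ne_one, prod_pow_sub_pow_ne_zero hp hodd hQ1 hQ2 n⟩
  rw [hfin.emultiplicity_eq_multiplicity]
  set V := multiplicity (p : ℤ) (∏ i ∈ range n, (Q ^ n - Q ^ i))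
  obtain ⟨m, hnm, hm⟩ := exists_le_pow_dvd_sub_mul_pow hp hodd hQ1 hQ2 V n hXb hb
  have hVm : (p : ℤ) ^ V ∣ ∏ i ∈ range n, (Q ^ m - Q ^ i) := pow_dvd_of_le_emultiplicity
    (hfin.emultiplicity_eq_multiplicity ▸ emultiplicity_prod_pow_sub_pow_le hp hodd hQ1 hQ2 hnm)
  have hXm : X ≡ b * Q ^ m [ZMOD (p : ℤ) ^ V] :=
    (Int.modEq_iff_dvd.mpr ((pow_dvd_pow _ V.le_succ).trans hm)).symm
  have hcong : ∏ i ∈ range n, (X - b * Q ^ i) ≡ b ^ n * ∏ i ∈ range n, (Q ^ m - Q ^ i)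
      [ZMOD (p : ℤ) ^ V] := calc
    _ ≡ ∏ i ∈ range n, (b * Q ^ m - b * Q ^ i) [ZMOD (p : ℤ) ^ V] :=
      Int.ModEq.prod fun i _ ↦ hXm.sub_right _
    _ = b ^ n * ∏ i ∈ range n, (Q ^ m - Q ^ i) := by
      simp_rw [← mul_sub]
      rw [prod_mul_distrib, prod_const, card_range]
  exact le_emultiplicity_of_pow_dvd (Int.modEq_zero_iff_dvd.mp
    (hcong.trans (Int.modEq_zero_iff_dvd.mpr (dvd_mul_of_dvd_right hVm _))))

end

theorem Rat.not_dvd_den_intCast_div_of_emultiplicity_le {p : ℕ} (hp : p.Prime) {A D : ℤ}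
    (hD : D ≠ 0) (h : emultiplicity (p : ℤ) D ≤ emultiplicity (p : ℤ) A) :
    ¬ p ∣ ((A : ℚ) / D).den := by
  have hfin : FiniteMultiplicity (p : ℤ) D :=
    Int.finiteMultiplicity_iff.mpr ⟨by simpa using hp.ne_one, hD⟩
  obtain ⟨A', hAA'⟩ := pow_dvd_of_le_emultiplicity (hfin.emultiplicity_eq_multiplicity ▸ h)
  obtain ⟨D', hDD', hD'⟩ := hfin.exists_eq_pow_mul_and_not_dvd
  generalize multiplicity (p : ℤ) D = V at hAA' hDD'
  subst hAA' hDD'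
  intro hpden
  push_cast at hpden
  rw [mul_div_mul_left _ _ (pow_ne_zero _ (by exact_mod_cast hp.ne_zero))] at hpden
  refine hD' (dvd_trans (Int.natCast_dvd_natCast.mpr hpden) ?_)
  rw [← Rat.divInt_eq_div]
  exact Rat.den_dvd A' D'

theorem dvd_pow_sub_one_and_not_sq_dvd_of_orderOf_eq {p : ℕ} (hp : p.Prime) {q : ℤ}
    (hq : orderOf (q : ZMod (p ^ 2)) = p * (p - 1)) :
    (p : ℤ) ∣ q ^ (p - 1) - 1 ∧ ¬ (p : ℤ) ^ 2 ∣ q ^ (p - 1) - 1 := by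
  have : Fact p.Prime := ⟨hp⟩
  have hpow : ((q : ZMod (p ^ 2)) ^ (p - 1)) ^ p = 1 := by
    rw [← pow_mul, mul_comm, ← hq, pow_orderOf_eq_one]
  constructor
  · have hmodp := congrArg (ZMod.castHom (dvd_pow_self p two_ne_zero) (ZMod p)) hpow
    simp only [map_pow, map_intCast, map_one, ZMod.pow_card] at hmodp
    exact_mod_cast (ZMod.intCast_eq_intCast_iff_dvd_sub 1 (q ^ (p - 1)) p).mp
      (by push_cast; exact hmodp.symm)
  · intro h
    have hmodp2 := (ZMod.intCast_eq_intCast_iff_dvd_sub 1 (q ^ (p - 1)) (p ^ 2)).mpr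
      (by exact_mod_cast h)
    push_cast at hmodp2
    have hle := Nat.le_of_dvd (Nat.sub_pos_of_lt hp.one_lt)
      (hq ▸ orderOf_dvd_of_pow_eq_one hmodp2.symm)
    exact hle.not_gt ((Nat.lt_mul_iff_one_lt_left (Nat.sub_pos_of_lt hp.one_lt)).mpr hp.one_lt)

/-- Let `p` be an odd prime, `q` primitive mod `p²`, `q̂ = q^{p−1}`.  The
rational functions `f̂_n(z) = ∏_{i=0}^{n-1}(z − q̂^i)/∏_{i=0}^{n-1}(q̂^n − q̂^i)`
take `p`-integral values on `1 + pℤ_(p)`: for every `x = 1 + p·y` with `y` a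
`p`-integral rational, the value `f̂_n(x)` is `p`-integral (its denominator is
prime to `p`). -/
theorem stmt18 (p : ℕ) (hp : p.Prime) (hodd : Odd p) (q : ℤ)
    (hq : orderOf (q : ZMod (p ^ 2)) = p * (p - 1)) (n : ℕ) :
    ∀ x : ℚ, (∃ y : ℚ, ¬ (p : ℕ) ∣ y.den ∧ x = 1 + p * y) →
      ¬ (p : ℕ) ∣ ((∏ i ∈ range n, (x - ((q : ℚ) ^ (p - 1)) ^ i)) /
          (∏ i ∈ range n,
            (((q : ℚ) ^ (p - 1)) ^ n - ((q : ℚ) ^ (p - 1)) ^ i))).den := by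
  rintro x ⟨y, hy, rfl⟩
  obtain ⟨hQ1, hQ2⟩ := dvd_pow_sub_one_and_not_sq_dvd_of_orderOf_eq hp hq
  have hprime : Prime (p : ℤ) := Nat.prime_iff_prime_int.mp hp
  have hden : ¬ (p : ℤ) ∣ y.den := by exact_mod_cast hy
  have hden0 : ((y.den : ℤ) : ℚ) ≠ 0 := by positivity
  have hx : 1 + p * y = ((y.den + p * y.num : ℤ) : ℚ) / (y.den : ℤ) := by
    rw [Int.cast_add, add_div, div_self hden0, Int.cast_mul, mul_div_assoc, Int.cast_natCast,
      Int.cast_natCast, Rat.num_div_den]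
  have hvalue : (∏ i ∈ range n, (1 + p * y - ((q : ℚ) ^ (p - 1)) ^ i)) /
      (∏ i ∈ range n, (((q : ℚ) ^ (p - 1)) ^ n - ((q : ℚ) ^ (p - 1)) ^ i)) =
      ((∏ i ∈ range n, (y.den + p * y.num - y.den * (q ^ (p - 1)) ^ i) : ℤ) : ℚ) /
        ((y.den ^ n * ∏ i ∈ range n, ((q ^ (p - 1)) ^ n - (q ^ (p - 1)) ^ i) : ℤ) : ℚ) := by
    simp_rw [hx, div_sub' hden0]
    push_cast
    rw [prod_div_distrib, prod_const, card_range, div_div, mul_comm]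
  rw [hvalue]
  refine Rat.not_dvd_den_intCast_div_of_emultiplicity_le hp
    (mul_ne_zero (by positivity) (prod_pow_sub_pow_ne_zero hp hodd hQ1 hQ2 n)) ?_
  rw [emultiplicity_mul hprime,
    emultiplicity_eq_zero.mpr fun h ↦ hden (hprime.dvd_of_dvd_pow h), zero_add]
  exact emultiplicity_prod_pow_sub_pow_le_emultiplicity_prod_sub hp hodd hQ1 hQ2 n
    (by simp) hden
end
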